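/- arXiv:2409.10418 — 5 statements merged into one kernel-verified Lean document; each statement's English description precedes it below -/
import Mathlib

section
/- If A → B is a theorem of the Hilbert system hR and both A and B are formulas of the ∘-free fragment L⁻, then A and B share a variable, i.e. some atom p occurs in both A and B. (Belnap's variable sharing theorem for R.) -/
/-- Formulas of the language L, generated from atoms by ¬, ∧, ∨, →, ∘. -/
inductive Fml : Type
  | atom : ℕ → Fml
  | neg : Fml → Fml
  | conj : Fml → Fml → Fml
  | disj : Fml → Fml → Fml
  | imp : Fml → Fml → Fml
  | fus : Fml → Fml → Fml

/-- A formula belongs to the ∘-free fragment L⁻. -/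
def circFree : Fml → Prop
  | .atom _ => True
  | .neg A => circFree A
  | .conj A B => circFree A ∧ circFree B
  | .disj A B => circFree A ∧ circFree B
  | .imp A B => circFree A ∧ circFree B
  | .fus _ _ => False

/-- Atom p occurs in the formula. -/
def occursF (p : ℕ) : Fml → Prop
  | .atom q => q = p
  | .neg A => occursF p A
  | .conj A B => occursF p A ∨ occursF p B
  | .disj A B => occursF p A ∨ occursF p B
  | .imp A B => occursF p A ∨ occursF p B
  | .fus A B => occursF p A ∨ occursF p B

/-- Theoremhood in the Hilbert system hR. -/
inductive HR : Fml → Prop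
  | A1 (A) : HR (.imp A A)
  | A2 (A B) : HR (.imp (.conj A B) A)
  | A3 (A B) : HR (.imp (.conj A B) B)
  | A4 (A B C) : HR (.imp (.conj (.imp A B) (.imp A C)) (.imp A (.conj B C)))
  | A5 (A B) : HR (.imp A (.disj A B))
  | A6 (A B) : HR (.imp B (.disj A B))
  | A7 (A B C) : HR (.imp (.conj (.imp A C) (.imp B C)) (.imp (.disj A B) C))
  | A8 (A B C) : HR (.imp (.conj A (.disj B C)) (.disj (.conj A B) (.conj A C)))
  | A9 (A) : HR (.imp (.neg (.neg A)) A)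
  | R1 {A B} : HR A → HR B → HR (.conj A B)
  | R2 {A B} : HR (.imp A B) → HR A → HR B
  | R3 {A B} : HR (.imp A (.neg B)) → HR (.imp B (.neg A))
  | R4 {A B C D} : HR (.imp A B) → HR (.imp C D) → HR (.imp (.imp B C) (.imp A D))
  | contraAx (A B) : HR (.imp (.imp A (.neg B)) (.imp B (.neg A)))
  | R5 {A} : HR A → HR (.neg (.imp A (.neg A)))
  | conjTrans (A B C) : HR (.imp (.conj (.imp A B) (.imp B C)) (.imp A C))
  | lem (A) : HR (.disj A (.neg A))
  | R8 {A B C} : HR (.disj C (.imp A B)) → HR (.disj C A) → HR (.disj C B)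
  | R9 {A C} : HR (.disj C A) → HR (.disj C (.neg (.imp A (.neg A))))
  | R10 {A B C D E} : HR (.disj E (.imp A B)) → HR (.disj E (.imp C D)) →
      HR (.disj E (.imp (.imp B C) (.imp A D)))
  | A11 (A B C) : HR (.imp (.imp A B) (.imp (.imp B C) (.imp A C)))
  | A12 (A B C) : HR (.imp (.imp A B) (.imp (.imp C A) (.imp C B)))
  | A13 (A B) : HR (.imp (.imp A (.imp A B)) (.imp A B))
  | A14 (A B) : HR (.imp A (.imp (.imp A B) B))


inductive V : Type
  | v0 | v1 | v2 | v3 | v4 | v5 | v6 | v7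
  deriving DecidableEq

instance : Fintype V :=
  ⟨⟨{.v0, .v1, .v2, .v3, .v4, .v5, .v6, .v7}, by decide⟩, by intro x; cases x <;> decide⟩

def Vneg : V → V
  | .v0 => .v7
  | .v1 => .v5
  | .v2 => .v6
  | .v3 => .v4
  | .v4 => .v3
  | .v5 => .v1
  | .v6 => .v2
  | .v7 => .v0

def Vand : V → V → V
  | .v0, .v0 => .v0
  | .v0, .v1 => .v0
  | .v0, .v2 => .v0
  | .v0, .v3 => .v0
  | .v0, .v4 => .v0
  | .v0, .v5 => .v0
  | .v0, .v6 => .v0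
  | .v0, .v7 => .v0
  | .v1, .v0 => .v0
  | .v1, .v1 => .v1
  | .v1, .v2 => .v0
  | .v1, .v3 => .v1
  | .v1, .v4 => .v0
  | .v1, .v5 => .v1
  | .v1, .v6 => .v0
  | .v1, .v7 => .v1
  | .v2, .v0 => .v0
  | .v2, .v1 => .v0
  | .v2, .v2 => .v2
  | .v2, .v3 => .v2
  | .v2, .v4 => .v0
  | .v2, .v5 => .v0
  | .v2, .v6 => .v2
  | .v2, .v7 => .v2
  | .v3, .v0 => .v0
  | .v3, .v1 => .v1
  | .v3, .v2 => .v2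
  | .v3, .v3 => .v3
  | .v3, .v4 => .v0
  | .v3, .v5 => .v1
  | .v3, .v6 => .v2
  | .v3, .v7 => .v3
  | .v4, .v0 => .v0
  | .v4, .v1 => .v0
  | .v4, .v2 => .v0
  | .v4, .v3 => .v0
  | .v4, .v4 => .v4
  | .v4, .v5 => .v4
  | .v4, .v6 => .v4
  | .v4, .v7 => .v4
  | .v5, .v0 => .v0
  | .v5, .v1 => .v1
  | .v5, .v2 => .v0
  | .v5, .v3 => .v1
  | .v5, .v4 => .v4
  | .v5, .v5 => .v5
  | .v5, .v6 => .v4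
  | .v5, .v7 => .v5
  | .v6, .v0 => .v0
  | .v6, .v1 => .v0
  | .v6, .v2 => .v2
  | .v6, .v3 => .v2
  | .v6, .v4 => .v4
  | .v6, .v5 => .v4
  | .v6, .v6 => .v6
  | .v6, .v7 => .v6
  | .v7, .v0 => .v0
  | .v7, .v1 => .v1
  | .v7, .v2 => .v2
  | .v7, .v3 => .v3
  | .v7, .v4 => .v4
  | .v7, .v5 => .v5
  | .v7, .v6 => .v6
  | .v7, .v7 => .v7

def Vor : V → V → V
  | .v0, .v0 => .v0
  | .v0, .v1 => .v1
  | .v0, .v2 => .v2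
  | .v0, .v3 => .v3
  | .v0, .v4 => .v4
  | .v0, .v5 => .v5
  | .v0, .v6 => .v6
  | .v0, .v7 => .v7
  | .v1, .v0 => .v1
  | .v1, .v1 => .v1
  | .v1, .v2 => .v3
  | .v1, .v3 => .v3
  | .v1, .v4 => .v5
  | .v1, .v5 => .v5
  | .v1, .v6 => .v7
  | .v1, .v7 => .v7
  | .v2, .v0 => .v2
  | .v2, .v1 => .v3
  | .v2, .v2 => .v2
  | .v2, .v3 => .v3
  | .v2, .v4 => .v6
  | .v2, .v5 => .v7
  | .v2, .v6 => .v6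
  | .v2, .v7 => .v7
  | .v3, .v0 => .v3
  | .v3, .v1 => .v3
  | .v3, .v2 => .v3
  | .v3, .v3 => .v3
  | .v3, .v4 => .v7
  | .v3, .v5 => .v7
  | .v3, .v6 => .v7
  | .v3, .v7 => .v7
  | .v4, .v0 => .v4
  | .v4, .v1 => .v5
  | .v4, .v2 => .v6
  | .v4, .v3 => .v7
  | .v4, .v4 => .v4
  | .v4, .v5 => .v5
  | .v4, .v6 => .v6
  | .v4, .v7 => .v7
  | .v5, .v0 => .v5
  | .v5, .v1 => .v5
  | .v5, .v2 => .v7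
  | .v5, .v3 => .v7
  | .v5, .v4 => .v5
  | .v5, .v5 => .v5
  | .v5, .v6 => .v7
  | .v5, .v7 => .v7
  | .v6, .v0 => .v6
  | .v6, .v1 => .v7
  | .v6, .v2 => .v6
  | .v6, .v3 => .v7
  | .v6, .v4 => .v6
  | .v6, .v5 => .v7
  | .v6, .v6 => .v6
  | .v6, .v7 => .v7
  | .v7, .v0 => .v7
  | .v7, .v1 => .v7
  | .v7, .v2 => .v7
  | .v7, .v3 => .v7
  | .v7, .v4 => .v7
  | .v7, .v5 => .v7
  | .v7, .v6 => .v7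
  | .v7, .v7 => .v7

def Vimp : V → V → V
  | .v0, .v0 => .v7
  | .v0, .v1 => .v7
  | .v0, .v2 => .v7
  | .v0, .v3 => .v7
  | .v0, .v4 => .v7
  | .v0, .v5 => .v7
  | .v0, .v6 => .v7
  | .v0, .v7 => .v7
  | .v1, .v0 => .v0
  | .v1, .v1 => .v5
  | .v1, .v2 => .v0
  | .v1, .v3 => .v5
  | .v1, .v4 => .v0
  | .v1, .v5 => .v5
  | .v1, .v6 => .v0
  | .v1, .v7 => .v7
  | .v2, .v0 => .v0
  | .v2, .v1 => .v0
  | .v2, .v2 => .v6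
  | .v2, .v3 => .v6
  | .v2, .v4 => .v0
  | .v2, .v5 => .v0
  | .v2, .v6 => .v6
  | .v2, .v7 => .v7
  | .v3, .v0 => .v0
  | .v3, .v1 => .v0
  | .v3, .v2 => .v0
  | .v3, .v3 => .v4
  | .v3, .v4 => .v0
  | .v3, .v5 => .v0
  | .v3, .v6 => .v0
  | .v3, .v7 => .v7
  | .v4, .v0 => .v0
  | .v4, .v1 => .v1
  | .v4, .v2 => .v2
  | .v4, .v3 => .v3
  | .v4, .v4 => .v4
  | .v4, .v5 => .v5
  | .v4, .v6 => .v6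
  | .v4, .v7 => .v7
  | .v5, .v0 => .v0
  | .v5, .v1 => .v1
  | .v5, .v2 => .v0
  | .v5, .v3 => .v1
  | .v5, .v4 => .v0
  | .v5, .v5 => .v5
  | .v5, .v6 => .v0
  | .v5, .v7 => .v7
  | .v6, .v0 => .v0
  | .v6, .v1 => .v0
  | .v6, .v2 => .v2
  | .v6, .v3 => .v2
  | .v6, .v4 => .v0
  | .v6, .v5 => .v0
  | .v6, .v6 => .v6
  | .v6, .v7 => .v7
  | .v7, .v0 => .v0
  | .v7, .v1 => .v0
  | .v7, .v2 => .v0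
  | .v7, .v3 => .v0
  | .v7, .v4 => .v0
  | .v7, .v5 => .v0
  | .v7, .v6 => .v0
  | .v7, .v7 => .v7

def Vfus : V → V → V
  | .v0, .v0 => .v0
  | .v0, .v1 => .v0
  | .v0, .v2 => .v0
  | .v0, .v3 => .v0
  | .v0, .v4 => .v0
  | .v0, .v5 => .v0
  | .v0, .v6 => .v0
  | .v0, .v7 => .v0
  | .v1, .v0 => .v0
  | .v1, .v1 => .v1
  | .v1, .v2 => .v7
  | .v1, .v3 => .v7
  | .v1, .v4 => .v1
  | .v1, .v5 => .v1
  | .v1, .v6 => .v7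
  | .v1, .v7 => .v7
  | .v2, .v0 => .v0
  | .v2, .v1 => .v7
  | .v2, .v2 => .v2
  | .v2, .v3 => .v7
  | .v2, .v4 => .v2
  | .v2, .v5 => .v7
  | .v2, .v6 => .v2
  | .v2, .v7 => .v7
  | .v3, .v0 => .v0
  | .v3, .v1 => .v7
  | .v3, .v2 => .v7
  | .v3, .v3 => .v7
  | .v3, .v4 => .v3
  | .v3, .v5 => .v7
  | .v3, .v6 => .v7
  | .v3, .v7 => .v7
  | .v4, .v0 => .v0
  | .v4, .v1 => .v1
  | .v4, .v2 => .v2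
  | .v4, .v3 => .v3
  | .v4, .v4 => .v4
  | .v4, .v5 => .v5
  | .v4, .v6 => .v6
  | .v4, .v7 => .v7
  | .v5, .v0 => .v0
  | .v5, .v1 => .v1
  | .v5, .v2 => .v7
  | .v5, .v3 => .v7
  | .v5, .v4 => .v5
  | .v5, .v5 => .v5
  | .v5, .v6 => .v7
  | .v5, .v7 => .v7
  | .v6, .v0 => .v0
  | .v6, .v1 => .v7
  | .v6, .v2 => .v2
  | .v6, .v3 => .v7
  | .v6, .v4 => .v6
  | .v6, .v5 => .v7
  | .v6, .v6 => .v6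
  | .v6, .v7 => .v7
  | .v7, .v0 => .v0
  | .v7, .v1 => .v7
  | .v7, .v2 => .v7
  | .v7, .v3 => .v7
  | .v7, .v4 => .v7
  | .v7, .v5 => .v7
  | .v7, .v6 => .v7
  | .v7, .v7 => .v7

def desig : V → Bool
  | .v0 => false
  | .v1 => false
  | .v2 => false
  | .v3 => false
  | .v4 => true
  | .v5 => true
  | .v6 => true
  | .v7 => true

def val (v : ℕ → V) : Fml → V
  | .atom p => v p
  | .neg A => Vneg (val v A)
  | .conj A B => Vand (val v A) (val v B)
  | .disj A B => Vor (val v A) (val v B)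
  | .imp A B => Vimp (val v A) (val v B)
  | .fus A B => Vfus (val v A) (val v B)

theorem lemOrAnd : ∀ x y e : V, desig (Vor e x) = true → desig (Vor e y) = true →
    desig (Vor e (Vand x y)) = true := by decide

theorem lemOrMono : ∀ x z e : V, desig (Vimp x z) = true → desig (Vor e x) = true →
    desig (Vor e z) = true := by decide

theorem lemR4ax : ∀ a b c d : V,
    desig (Vimp (Vand (Vimp a b) (Vimp c d)) (Vimp (Vimp b c) (Vimp a d))) = true := by decide

set_option maxHeartbeats 1000000 in
theorem hr_sound {A : Fml} (h : HR A) : ∀ v, desig (val v A) = true := by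
  induction h with
  | A1 A => exact fun v => (by decide : ∀ a, desig (Vimp a a) = true) _
  | A2 A B => exact fun v => (by decide : ∀ a b, desig (Vimp (Vand a b) a) = true) _ _
  | A3 A B => exact fun v => (by decide : ∀ a b, desig (Vimp (Vand a b) b) = true) _ _
  | A4 A B C => exact fun v => (by decide : ∀ a b c, desig (Vimp (Vand (Vimp a b) (Vimp a c)) (Vimp a (Vand b c))) = true) _ _ _
  | A5 A B => exact fun v => (by decide : ∀ a b, desig (Vimp a (Vor a b)) = true) _ _
  | A6 A B => exact fun v => (by decide : ∀ a b, desig (Vimp b (Vor a b)) = true) _ _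
  | A7 A B C => exact fun v => (by decide : ∀ a b c, desig (Vimp (Vand (Vimp a c) (Vimp b c)) (Vimp (Vor a b) c)) = true) _ _ _
  | A8 A B C => exact fun v => (by decide : ∀ a b c, desig (Vimp (Vand a (Vor b c)) (Vor (Vand a b) (Vand a c))) = true) _ _ _
  | A9 A => exact fun v => (by decide : ∀ a, desig (Vimp (Vneg (Vneg a)) a) = true) _
  | R1 h1 h2 ih1 ih2 => exact fun v => (by decide : ∀ a b, desig a = true → desig b = true → desig (Vand a b) = true) _ _ (ih1 v) (ih2 v)
  | R2 h1 h2 ih1 ih2 => exact fun v => (by decide : ∀ a b, desig (Vimp a b) = true → desig a = true → desig b = true) _ _ (ih1 v) (ih2 v)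
  | R3 h1 ih1 => exact fun v => (by decide : ∀ a b, desig (Vimp a (Vneg b)) = true → desig (Vimp b (Vneg a)) = true) _ _ (ih1 v)
  | R4 h1 h2 ih1 ih2 => exact fun v => (by decide : ∀ a b c d, desig (Vimp a b) = true → desig (Vimp c d) = true → desig (Vimp (Vimp b c) (Vimp a d)) = true) _ _ _ _ (ih1 v) (ih2 v)
  | contraAx A B => exact fun v => (by decide : ∀ a b, desig (Vimp (Vimp a (Vneg b)) (Vimp b (Vneg a))) = true) _ _
  | R5 h1 ih1 => exact fun v => (by decide : ∀ a, desig a = true → desig (Vneg (Vimp a (Vneg a))) = true) _ (ih1 v)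
  | conjTrans A B C => exact fun v => (by decide : ∀ a b c, desig (Vimp (Vand (Vimp a b) (Vimp b c)) (Vimp a c)) = true) _ _ _
  | lem A => exact fun v => (by decide : ∀ a, desig (Vor a (Vneg a)) = true) _
  | R8 h1 h2 ih1 ih2 => exact fun v => (by decide : ∀ a b c, desig (Vor c (Vimp a b)) = true → desig (Vor c a) = true → desig (Vor c b) = true) _ _ _ (ih1 v) (ih2 v)
  | R9 h1 ih1 => exact fun v => (by decide : ∀ a c, desig (Vor c a) = true → desig (Vor c (Vneg (Vimp a (Vneg a)))) = true) _ _ (ih1 v)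
  | R10 h1 h2 ih1 ih2 =>
      exact fun v => lemOrMono _ _ _ (lemR4ax _ _ _ _) (lemOrAnd _ _ _ (ih1 v) (ih2 v))
  | A11 A B C => exact fun v => (by decide : ∀ a b c, desig (Vimp (Vimp a b) (Vimp (Vimp b c) (Vimp a c))) = true) _ _ _
  | A12 A B C => exact fun v => (by decide : ∀ a b c, desig (Vimp (Vimp a b) (Vimp (Vimp c a) (Vimp c b))) = true) _ _ _
  | A13 A B => exact fun v => (by decide : ∀ a b, desig (Vimp (Vimp a (Vimp a b)) (Vimp a b)) = true) _ _
  | A14 A B => exact fun v => (by decide : ∀ a b, desig (Vimp a (Vimp (Vimp a b) b)) = true) _ _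

def occursB (p : ℕ) : Fml → Bool
  | .atom q => q == p
  | .neg A => occursB p A
  | .conj A B => occursB p A || occursB p B
  | .disj A B => occursB p A || occursB p B
  | .imp A B => occursB p A || occursB p B
  | .fus A B => occursB p A || occursB p B

theorem occursB_iff (A : Fml) (p : ℕ) : occursB p A = true ↔ occursF p A := by
  induction A with
  | atom q => simp [occursB, occursF]
  | neg A ih => exact ih
  | conj A B ihA ihB => simp [occursB, occursF, ihA, ihB]
  | disj A B ihA ihB => simp [occursB, occursF, ihA, ihB]
  | imp A B ihA ihB => simp [occursB, occursF, ihA, ihB]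
  | fus A B ihA ihB => simp [occursB, occursF, ihA, ihB]

def inS1 : V → Bool
  | .v1 => true
  | .v5 => true
  | _ => false

def inS2 : V → Bool
  | .v2 => true
  | .v6 => true
  | _ => false

theorem valS1 (v : ℕ → V) (A : Fml) (hA : circFree A)
    (hv : ∀ p, occursF p A → inS1 (v p) = true) : inS1 (val v A) = true := by
  induction A with
  | atom q => exact hv q rfl
  | neg A ih =>
      exact (by decide : ∀ a, inS1 a = true → inS1 (Vneg a) = true) _ (ih hA hv)
  | conj A B ihA ihB =>
      exact (by decide : ∀ a b, inS1 a = true → inS1 b = true → inS1 (Vand a b) = true) _ _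
        (ihA hA.1 fun p hp => hv p (Or.inl hp)) (ihB hA.2 fun p hp => hv p (Or.inr hp))
  | disj A B ihA ihB =>
      exact (by decide : ∀ a b, inS1 a = true → inS1 b = true → inS1 (Vor a b) = true) _ _
        (ihA hA.1 fun p hp => hv p (Or.inl hp)) (ihB hA.2 fun p hp => hv p (Or.inr hp))
  | imp A B ihA ihB =>
      exact (by decide : ∀ a b, inS1 a = true → inS1 b = true → inS1 (Vimp a b) = true) _ _
        (ihA hA.1 fun p hp => hv p (Or.inl hp)) (ihB hA.2 fun p hp => hv p (Or.inr hp))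
  | fus A B ihA ihB => exact absurd hA id

theorem valS2 (v : ℕ → V) (A : Fml) (hA : circFree A)
    (hv : ∀ p, occursF p A → inS2 (v p) = true) : inS2 (val v A) = true := by
  induction A with
  | atom q => exact hv q rfl
  | neg A ih =>
      exact (by decide : ∀ a, inS2 a = true → inS2 (Vneg a) = true) _ (ih hA hv)
  | conj A B ihA ihB =>
      exact (by decide : ∀ a b, inS2 a = true → inS2 b = true → inS2 (Vand a b) = true) _ _
        (ihA hA.1 fun p hp => hv p (Or.inl hp)) (ihB hA.2 fun p hp => hv p (Or.inr hp))
  | disj A B ihA ihB =>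
      exact (by decide : ∀ a b, inS2 a = true → inS2 b = true → inS2 (Vor a b) = true) _ _
        (ihA hA.1 fun p hp => hv p (Or.inl hp)) (ihB hA.2 fun p hp => hv p (Or.inr hp))
  | imp A B ihA ihB =>
      exact (by decide : ∀ a b, inS2 a = true → inS2 b = true → inS2 (Vimp a b) = true) _ _
        (ihA hA.1 fun p hp => hv p (Or.inl hp)) (ihB hA.2 fun p hp => hv p (Or.inr hp))
  | fus A B ihA ihB => exact absurd hA id

/-- Belnap's variable sharing theorem for R: if A → B is a theorem of hR and A, B are
∘-free, then A and B share a variable. -/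
theorem belnap_variable_sharing (A B : Fml) (h : HR (.imp A B))
    (hA : circFree A) (hB : circFree B) :
    ∃ p, occursF p A ∧ occursF p B := by
  by_contra hns
  push_neg at hns
  have hsound := hr_sound h (fun p => if occursB p A then V.v1 else V.v2)
  set v : ℕ → V := fun p => if occursB p A then V.v1 else V.v2 with hvdef
  have h1 : inS1 (val v A) = true := by
    refine valS1 v A hA fun p hp => ?_
    have : occursB p A = true := (occursB_iff A p).2 hp
    simp [v, this, inS1]
  have h2 : inS2 (val v B) = true := by
    refine valS2 v B hB fun p hp => ?_
    have hnA : ¬ occursF p A := fun h' => hns p h' hp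
    have : occursB p A = false := by
      rw [← Bool.not_eq_true, occursB_iff]; exact hnA
    simp [v, this, inS2]
  have hcross : desig (Vimp (val v A) (val v B)) = false :=
    (by decide : ∀ a b, inS1 a = true → inS2 b = true → desig (Vimp a b) = false) _ _ h1 h2
  simp only [val] at hsound
  rw [hsound] at hcross
  exact Bool.noConfusion hcross
end

section
/- Let Γ be a set of formulas of the ∘-free fragment L⁻ such that every member of Γ is a theorem of hR, and such that Γ is weakly invariant under depth substitutions with values in L⁻ (for every depth substitution d taking values in L⁻, A ∈ Γ implies d^0(A) ∈ Γ). Then for every formula A → B ∈ Γ, A and B depth-share a variable: some atom p occurs at the same depth n in both A and B. -/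
/-- Atom p occurs at depth n in the formula (the whole formula occurring at depth 0):
if A∘B occurs at depth n then A occurs at depth n−1 and B at depth n; ∧, ∨, ¬ preserve
depth; if A→B occurs at depth n then A and B occur at depth n+1. -/
def occursAtF (p : ℕ) : Fml → ℤ → Prop
  | .atom q, n => q = p ∧ n = 0
  | .neg A, n => occursAtF p A n
  | .conj A B, n => occursAtF p A n ∨ occursAtF p B n
  | .disj A B, n => occursAtF p A n ∨ occursAtF p B n
  | .imp A B, n => occursAtF p A (n - 1) ∨ occursAtF p B (n - 1)
  | .fus A B, n => occursAtF p A (n + 1) ∨ occursAtF p B n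

/-- Extension of a depth substitution d : ℤ × At → L to formulas:
d^n(¬A) = ¬d^n(A), d^n(A∧B) = d^n(A)∧d^n(B), d^n(A∨B) = d^n(A)∨d^n(B),
d^n(A→B) = d^{n+1}(A)→d^{n+1}(B), d^n(A∘B) = d^{n−1}(A)∘d^n(B). -/
def subF (d : ℤ → ℕ → Fml) : ℤ → Fml → Fml
  | n, .atom p => d n p
  | n, .neg A => .neg (subF d n A)
  | n, .conj A B => .conj (subF d n A) (subF d n B)
  | n, .disj A B => .disj (subF d n A) (subF d n B)
  | n, .imp A B => .imp (subF d (n + 1) A) (subF d (n + 1) B)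
  | n, .fus A B => .fus (subF d (n - 1) A) (subF d n B)

namespace DepthRelAux

abbrev M := Fin 6

def mneg : M → M := ![5, 4, 2, 3, 1, 0]

def mmt : M → M → M :=
  ![![0,0,0,0,0,0], ![0,1,1,1,1,1], ![0,1,2,1,2,2],
    ![0,1,1,3,3,3], ![0,1,2,3,4,4], ![0,1,2,3,4,5]]

def mjn : M → M → M :=
  ![![0,1,2,3,4,5], ![1,1,2,3,4,5], ![2,2,2,4,4,5],
    ![3,3,4,3,4,5], ![4,4,4,4,4,5], ![5,5,5,5,5,5]]

def mimp : M → M → M :=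
  ![![5,5,5,5,5,5], ![0,1,2,3,4,5], ![0,0,2,0,2,5],
    ![0,0,0,3,3,5], ![0,0,0,0,1,5], ![0,0,0,0,0,5]]

def desig (x : M) : Prop := x ≠ 0

instance : DecidablePred desig := fun x => instDecidableNot

/-- Evaluation of formulas in the six-element matrix. -/
def ev (v : ℕ → M) : Fml → M
  | .atom p => v p
  | .neg A => mneg (ev v A)
  | .conj A B => mmt (ev v A) (ev v B)
  | .disj A B => mjn (ev v A) (ev v B)
  | .imp A B => mimp (ev v A) (ev v B)
  | .fus A B => mmt (ev v A) (ev v B)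

/-- Soundness of hR with respect to the matrix. -/
theorem sound {A : Fml} (h : HR A) (v : ℕ → M) : desig (ev v A) := by
  induction h with
  | A1 A => exact (by decide : ∀ x : M, desig (mimp x x)) _
  | A2 A B => exact (by decide : ∀ x y : M, desig (mimp (mmt x y) x)) _ _
  | A3 A B => exact (by decide : ∀ x y : M, desig (mimp (mmt x y) y)) _ _
  | A4 A B C => exact (by decide :
      ∀ x y z : M, desig (mimp (mmt (mimp x y) (mimp x z)) (mimp x (mmt y z)))) _ _ _
  | A5 A B => exact (by decide : ∀ x y : M, desig (mimp x (mjn x y))) _ _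
  | A6 A B => exact (by decide : ∀ x y : M, desig (mimp y (mjn x y))) _ _
  | A7 A B C => exact (by decide :
      ∀ x y z : M, desig (mimp (mmt (mimp x z) (mimp y z)) (mimp (mjn x y) z))) _ _ _
  | A8 A B C => exact (by decide :
      ∀ x y z : M, desig (mimp (mmt x (mjn y z)) (mjn (mmt x y) (mmt x z)))) _ _ _
  | A9 A => exact (by decide : ∀ x : M, desig (mimp (mneg (mneg x)) x)) _
  | R1 _ _ ih1 ih2 => exact (by decide :
      ∀ x y : M, desig x → desig y → desig (mmt x y)) _ _ ih1 ih2
  | R2 _ _ ih1 ih2 => exact (by decide :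
      ∀ x y : M, desig (mimp x y) → desig x → desig y) _ _ ih1 ih2
  | R3 _ ih => exact (by decide :
      ∀ x y : M, desig (mimp x (mneg y)) → desig (mimp y (mneg x))) _ _ ih
  | R4 _ _ ih1 ih2 => exact (by decide :
      ∀ x y z w : M, desig (mimp x y) → desig (mimp z w) →
        desig (mimp (mimp y z) (mimp x w))) _ _ _ _ ih1 ih2
  | contraAx A B => exact (by decide :
      ∀ x y : M, desig (mimp (mimp x (mneg y)) (mimp y (mneg x)))) _ _
  | R5 _ ih => exact (by decide :
      ∀ x : M, desig x → desig (mneg (mimp x (mneg x)))) _ ih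
  | conjTrans A B C => exact (by decide :
      ∀ x y z : M, desig (mimp (mmt (mimp x y) (mimp y z)) (mimp x z))) _ _ _
  | lem A => exact (by decide : ∀ x : M, desig (mjn x (mneg x))) _
  | R8 _ _ ih1 ih2 => exact (by decide :
      ∀ e x y : M, desig (mjn e (mimp x y)) → desig (mjn e x) → desig (mjn e y)) _ _ _ ih1 ih2
  | R9 _ ih => exact (by decide :
      ∀ e x : M, desig (mjn e x) → desig (mjn e (mneg (mimp x (mneg x))))) _ _ ih
  | R10 _ _ ih1 ih2 => exact (by decide :
      ∀ e x y z w : M, desig (mjn e (mimp x y)) → desig (mjn e (mimp z w)) →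
        desig (mjn e (mimp (mimp y z) (mimp x w)))) _ _ _ _ _ ih1 ih2
  | A11 A B C => exact (by decide :
      ∀ x y z : M, desig (mimp (mimp x y) (mimp (mimp y z) (mimp x z)))) _ _ _
  | A12 A B C => exact (by decide :
      ∀ x y z : M, desig (mimp (mimp x y) (mimp (mimp z x) (mimp z y)))) _ _ _
  | A13 A B => exact (by decide :
      ∀ x y : M, desig (mimp (mimp x (mimp x y)) (mimp x y))) _ _
  | A14 A B => exact (by decide :
      ∀ x y : M, desig (mimp x (mimp (mimp x y) y))) _ _

/-- An injective encoding of (depth, atom) pairs into atoms. -/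
def enc (n : ℤ) (p : ℕ) : ℕ := Nat.pair (Encodable.encode n) p

theorem enc_inj {n m : ℤ} {p q : ℕ} (h : enc n p = enc m q) : n = m ∧ p = q := by
  unfold enc at h
  have h' := Nat.pair_eq_pair.mp h
  exact ⟨Encodable.encode_injective h'.1, h'.2⟩

/-- The canonical depth substitution sending (n, p) to a fresh atom. -/
def dsub : ℤ → ℕ → Fml := fun n p => .atom (enc n p)

/-- If every atom occurrence of C at depth m is sent by v to x, and x is a fixed
point of all operations, then the substituted formula evaluates to x. -/
theorem ev_subF (x : M) (hneg : mneg x = x) (hmt : mmt x x = x) (hjn : mjn x x = x)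
    (himp : mimp x x = x) (v : ℕ → M) :
    ∀ (C : Fml), circFree C → ∀ (k : ℤ),
      (∀ (p : ℕ) (m : ℤ), occursAtF p C m → v (enc (k + m) p) = x) →
      ev v (subF dsub k C) = x := by
  intro C
  induction C with
  | atom p =>
    intro _ k hv
    have := hv p 0 (by exact ⟨rfl, rfl⟩)
    simpa [subF, dsub, ev] using this
  | neg A ih =>
    intro hc k hv
    have := ih hc k (fun p m hm => hv p m hm)
    simp [subF, ev, this, hneg]
  | conj A B ihA ihB =>
    intro hc k hv
    have hA := ihA hc.1 k (fun p m hm => hv p m (Or.inl hm))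
    have hB := ihB hc.2 k (fun p m hm => hv p m (Or.inr hm))
    simp [subF, ev, hA, hB, hmt]
  | disj A B ihA ihB =>
    intro hc k hv
    have hA := ihA hc.1 k (fun p m hm => hv p m (Or.inl hm))
    have hB := ihB hc.2 k (fun p m hm => hv p m (Or.inr hm))
    simp [subF, ev, hA, hB, hjn]
  | imp A B ihA ihB =>
    intro hc k hv
    have hA := ihA hc.1 (k + 1) (fun p m hm => by
      have hocc : occursAtF p (Fml.imp A B) (m + 1) := by
        show occursAtF p A (m + 1 - 1) ∨ _
        exact Or.inl (by simpa using hm)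
      have := hv p (m + 1) hocc
      rwa [show k + (m + 1) = k + 1 + m by ring] at this)
    have hB := ihB hc.2 (k + 1) (fun p m hm => by
      have hocc : occursAtF p (Fml.imp A B) (m + 1) := by
        refine Or.inr ?_
        simpa using hm
      have := hv p (m + 1) hocc
      rwa [show k + (m + 1) = k + 1 + m by ring] at this)
    simp [subF, ev, hA, hB, himp]
  | fus A B _ _ =>
    intro hc _ _
    exact absurd hc (by simp [circFree])

end DepthRelAux

/-- If Γ is a set of ∘-free theorems of hR that is weakly invariant under depth
substitutions taking values in the ∘-free fragment, then the antecedent and consequent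
of any implication in Γ depth-share a variable. -/
theorem depth_invariance_gives_depth_relevance (Γ : Set Fml)
    (hfree : ∀ A ∈ Γ, circFree A)
    (hthm : ∀ A ∈ Γ, HR A)
    (hinv : ∀ d : ℤ → ℕ → Fml, (∀ (n : ℤ) (p : ℕ), circFree (d n p)) →
      ∀ A ∈ Γ, subF d 0 A ∈ Γ)
    (A B : Fml) (hAB : Fml.imp A B ∈ Γ) :
    ∃ (p : ℕ) (n : ℤ), occursAtF p A n ∧ occursAtF p B n := by
  classical
  by_contra hcon
  push_neg at hcon
  open DepthRelAux in
  -- valuation: atoms coming from A get value 2, all others get value 3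
  have hfreeAB := hfree _ hAB
  have hcf : circFree A ∧ circFree B := hfreeAB
  set v : ℕ → M := fun q =>
    if ∃ (p : ℕ) (m : ℤ), occursAtF p A m ∧ q = enc (1 + m) p then (2 : M) else 3 with hv
  have hGamma : subF dsub 0 (Fml.imp A B) ∈ Γ :=
    hinv dsub (fun n p => trivial) _ hAB
  have hHR : HR (subF dsub 0 (Fml.imp A B)) := hthm _ hGamma
  have hevA : ev v (subF dsub 1 A) = 2 := by
    refine ev_subF 2 (by decide) (by decide) (by decide) (by decide) v A hcf.1 1 ?_
    intro p m hm
    simp only [hv]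
    rw [if_pos ⟨p, m, hm, rfl⟩]
  have hevB : ev v (subF dsub 1 B) = 3 := by
    refine ev_subF 3 (by decide) (by decide) (by decide) (by decide) v B hcf.2 1 ?_
    intro p m hm
    simp only [hv]
    rw [if_neg ?_]
    rintro ⟨p', m', hm', heq⟩
    obtain ⟨h1, h2⟩ := enc_inj heq
    have : m = m' := by omega
    subst this
    subst h2
    exact hcon p m hm' hm
  have hsound := sound hHR v
  have : subF dsub 0 (Fml.imp A B) =
      Fml.imp (subF dsub 1 A) (subF dsub 1 B) := by
    show Fml.imp (subF dsub (0 + 1) A) (subF dsub (0 + 1) B) = _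
    norm_num
  rw [this] at hsound
  have : ev v (Fml.imp (subF dsub 1 A) (subF dsub 1 B)) = mimp 2 3 := by
    simp [ev, hevA, hevB]
  rw [this] at hsound
  exact hsound (by decide)
end

section
/- The logic hDR⁻ is closed under depth substitutions: for every depth substitution d, if A is a theorem of hDR⁻, then d^0(A) is a theorem of hDR⁻. -/
/-- Theoremhood in the Hilbert system hDR⁻ (hB plus (A→¬B)→(B→¬A) and the rule A ⇒ ¬(A→¬A)). -/
inductive HDRm : Fml → Prop
  | A1 (A) : HDRm (.imp A A)
  | A2 (A B) : HDRm (.imp (.conj A B) A)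
  | A3 (A B) : HDRm (.imp (.conj A B) B)
  | A4 (A B C) : HDRm (.imp (.conj (.imp A B) (.imp A C)) (.imp A (.conj B C)))
  | A5 (A B) : HDRm (.imp A (.disj A B))
  | A6 (A B) : HDRm (.imp B (.disj A B))
  | A7 (A B C) : HDRm (.imp (.conj (.imp A C) (.imp B C)) (.imp (.disj A B) C))
  | A8 (A B C) : HDRm (.imp (.conj A (.disj B C)) (.disj (.conj A B) (.conj A C)))
  | A9 (A) : HDRm (.imp (.neg (.neg A)) A)
  | R1 {A B} : HDRm A → HDRm B → HDRm (.conj A B)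
  | R2 {A B} : HDRm (.imp A B) → HDRm A → HDRm B
  | R3 {A B} : HDRm (.imp A (.neg B)) → HDRm (.imp B (.neg A))
  | R4 {A B C D} : HDRm (.imp A B) → HDRm (.imp C D) → HDRm (.imp (.imp B C) (.imp A D))
  | contraAx (A B) : HDRm (.imp (.imp A (.neg B)) (.imp B (.neg A)))
  | R5 {A} : HDRm A → HDRm (.neg (.imp A (.neg A)))

lemma hDRm_subF_aux (d : ℤ → ℕ → Fml) {A : Fml} (h : HDRm A) :
    ∀ n : ℤ, HDRm (subF d n A) := by
  induction h with
  | A1 A => intro n; simp only [subF]; exact HDRm.A1 _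
  | A2 A B => intro n; simp only [subF]; exact HDRm.A2 _ _
  | A3 A B => intro n; simp only [subF]; exact HDRm.A3 _ _
  | A4 A B C => intro n; simp only [subF]; exact HDRm.A4 _ _ _
  | A5 A B => intro n; simp only [subF]; exact HDRm.A5 _ _
  | A6 A B => intro n; simp only [subF]; exact HDRm.A6 _ _
  | A7 A B C => intro n; simp only [subF]; exact HDRm.A7 _ _ _
  | A8 A B C => intro n; simp only [subF]; exact HDRm.A8 _ _ _
  | A9 A => intro n; simp only [subF]; exact HDRm.A9 _
  | R1 _ _ ih1 ih2 => intro n; simp only [subF]; exact HDRm.R1 (ih1 n) (ih2 n)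
  | R2 _ _ ih1 ih2 =>
      intro n
      have h1 := ih1 (n - 1)
      simp only [subF, sub_add_cancel] at h1
      exact HDRm.R2 h1 (ih2 n)
  | R3 _ ih =>
      intro n
      have h1 := ih n
      simp only [subF] at h1 ⊢
      exact HDRm.R3 h1
  | R4 _ _ ih1 ih2 =>
      intro n
      have h1 := ih1 (n + 1)
      have h2 := ih2 (n + 1)
      simp only [subF] at h1 h2 ⊢
      exact HDRm.R4 h1 h2
  | contraAx A B => intro n; simp only [subF]; exact HDRm.contraAx _ _
  | R5 _ ih =>
      intro n
      have h1 := ih (n + 1)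
      simp only [subF]
      exact HDRm.R5 h1

/-- hDR⁻ is closed under depth substitutions: if A is a theorem of hDR⁻ then so is
d⁰(A), for every depth substitution d. -/
theorem hDRminus_closed_under_depth_subs (d : ℤ → ℕ → Fml) (A : Fml)
    (h : HDRm A) : HDRm (subF d 0 A) := hDRm_subF_aux d h 0
end

section
/- If the consecution X ⊩ A is provable in the natural deduction system B, then for every depth substitution d and every n ∈ ℤ, the consecution d^n(X) ⊩ d^n(A) is also provable in B. -/
/-- Bunches: formulas are the atomic bunches, closed under comma and semicolon. -/
inductive Bunch : Type
  | fml : Fml → Bunch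
  | comma : Bunch → Bunch → Bunch
  | semi : Bunch → Bunch → Bunch

/-- Extension of a depth substitution to bunches:
d^n(X,Y) = d^n(X),d^n(Y) and d^n(X;Y) = d^{n−1}(X);d^n(Y). -/
def subB (d : ℤ → ℕ → Fml) : ℤ → Bunch → Bunch
  | n, .fml A => .fml (subF d n A)
  | n, .comma X Y => .comma (subB d n X) (subB d n Y)
  | n, .semi X Y => .semi (subB d (n - 1) X) (subB d n Y)

/-- Bunch contexts: a bunch with one distinguished hole at a bunch position. -/
inductive Ctx : Type
  | hole : Ctx
  | commaL : Ctx → Bunch → Ctx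
  | commaR : Bunch → Ctx → Ctx
  | semiL : Ctx → Bunch → Ctx
  | semiR : Bunch → Ctx → Ctx

/-- Filling the hole of a bunch context with a bunch. -/
def Ctx.fill : Ctx → Bunch → Bunch
  | .hole, X => X
  | .commaL c Y, X => .comma (c.fill X) Y
  | .commaR Y c, X => .comma Y (c.fill X)
  | .semiL c Y, X => .semi (c.fill X) Y
  | .semiR Y c, X => .semi Y (c.fill X)

/-- The natural deduction system B; `NDB X A` means the consecution X ⊩ A is provable
(it has a derivation all of whose leaves are instances of (id)). -/
inductive NDB : Bunch → Fml → Prop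
  | id (A) : NDB (.fml A) A
  | impI {X A B} : NDB (.semi X (.fml A)) B → NDB X (.imp A B)
  | impE {X Y A B} : NDB X (.imp A B) → NDB Y A → NDB (.semi X Y) B
  | orI1 {X A} (B) : NDB X A → NDB X (.disj A B)
  | orI2 {X B} (A) : NDB X B → NDB X (.disj A B)
  | orE {X A B C} {Y : Ctx} : NDB X (.disj A B) → NDB (Y.fill (.fml A)) C →
      NDB (Y.fill (.fml B)) C → NDB (Y.fill X) C
  | andI {X Y A B} : NDB X A → NDB Y B → NDB (.comma X Y) (.conj A B)
  | andE {X A B C} {Y : Ctx} : NDB X (.conj A B) →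
      NDB (Y.fill (.comma (.fml A) (.fml B))) C → NDB (Y.fill X) C
  | fusI {X Y A B} : NDB X A → NDB Y B → NDB (.semi X Y) (.fus A B)
  | fusE {X A B C} {Y : Ctx} : NDB X (.fus A B) →
      NDB (Y.fill (.semi (.fml A) (.fml B))) C → NDB (Y.fill X) C
  | negI {X A B} : NDB X B → NDB (.fml A) (.neg B) → NDB X (.neg A)
  | negE {X A} : NDB X (.neg (.neg A)) → NDB X A
  | cut {X A B} {Y : Ctx} : NDB X A → NDB (Y.fill (.fml A)) B → NDB (Y.fill X) B
  | eB {W : Ctx} {X Y Z A} : NDB (W.fill (.comma X (.comma Y Z))) A →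
      NDB (W.fill (.comma (.comma X Y) Z)) A
  | eC {W : Ctx} {X Y A} : NDB (W.fill (.comma X Y)) A → NDB (W.fill (.comma Y X)) A
  | eW {W : Ctx} {X A} : NDB (W.fill (.comma X X)) A → NDB (W.fill X) A
  | eK {W : Ctx} {X Y A} : NDB (W.fill X) A → NDB (W.fill (.comma X Y)) A


/-- Substitution applied to a context. -/
def subC (d : ℤ → ℕ → Fml) : ℤ → Ctx → Ctx
  | _, .hole => .hole
  | n, .commaL c Y => .commaL (subC d n c) (subB d n Y)
  | n, .commaR Y c => .commaR (subB d n Y) (subC d n c)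
  | n, .semiL c Y => .semiL (subC d (n - 1) c) (subB d n Y)
  | n, .semiR Y c => .semiR (subB d (n - 1) Y) (subC d n c)

/-- Depth of the hole of a context. -/
def hd : ℤ → Ctx → ℤ
  | n, .hole => n
  | n, .commaL c _ => hd n c
  | n, .commaR _ c => hd n c
  | n, .semiL c _ => hd (n - 1) c
  | n, .semiR _ c => hd n c

lemma fill_sub (d : ℤ → ℕ → Fml) (c : Ctx) (X : Bunch) (n : ℤ) :
    subB d n (c.fill X) = (subC d n c).fill (subB d (hd n c) X) := by
  induction c generalizing n <;>
    simp [Ctx.fill, subB, subC, hd, *]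

/-- If X ⊩ A is provable in the natural deduction system B, then so is
d^n(X) ⊩ d^n(A), for every depth substitution d and every n ∈ ℤ. -/
theorem NDB_depth_invariance (X : Bunch) (A : Fml) (h : NDB X A)
    (d : ℤ → ℕ → Fml) (n : ℤ) : NDB (subB d n X) (subF d n A) := by
  induction h generalizing n with
  | id A => exact .id _
  | impI _ ih =>
    have h := ih (n + 1)
    simp only [subB, add_sub_cancel_right] at h
    exact .impI h
  | impE _ _ ih1 ih2 =>
    have h := ih1 (n - 1)
    simp only [subF, sub_add_cancel] at h
    exact .impE h (ih2 n)
  | orI1 B _ ih => exact .orI1 _ (ih n)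
  | orI2 A _ ih => exact .orI2 _ (ih n)
  | orE _ _ _ ih1 ih2 ih3 =>
    rw [fill_sub]
    have h2 := ih2 n; have h3 := ih3 n
    rw [fill_sub] at h2 h3
    exact .orE (ih1 _) h2 h3
  | andI _ _ ih1 ih2 => exact .andI (ih1 n) (ih2 n)
  | andE _ _ ih1 ih2 =>
    rw [fill_sub]
    have h2 := ih2 n
    rw [fill_sub] at h2
    exact .andE (ih1 _) h2
  | fusI _ _ ih1 ih2 => exact .fusI (ih1 (n - 1)) (ih2 n)
  | fusE _ _ ih1 ih2 =>
    rw [fill_sub]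
    have h2 := ih2 n
    rw [fill_sub] at h2
    exact .fusE (ih1 _) h2
  | negI _ _ ih1 ih2 => exact .negI (ih1 n) (ih2 n)
  | negE _ ih => exact .negE (ih n)
  | cut _ _ ih1 ih2 =>
    rw [fill_sub]
    have h2 := ih2 n
    rw [fill_sub] at h2
    exact .cut (ih1 _) h2
  | eB _ ih =>
    rw [fill_sub]
    have h := ih n
    rw [fill_sub] at h
    exact .eB h
  | eC _ ih =>
    rw [fill_sub]
    have h := ih n
    rw [fill_sub] at h
    exact .eC h
  | eW _ ih =>
    rw [fill_sub]
    have h := ih n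
    rw [fill_sub] at h
    exact .eW h
  | eK _ ih =>
    rw [fill_sub]
    have h := ih n
    rw [fill_sub] at h
    exact .eK h
end

section
/- If the consecution X ⊩ A is provable in the natural deduction system B, then X and A depth-share a variable: some atom p occurs at the same depth n ∈ ℤ in both X and A. -/
/-- Atom p occurs at depth n in the bunch (the whole bunch occurring at depth 0):
if X;Y occurs at depth n then X occurs at depth n−1 and Y at depth n; comma preserves
depth. -/
def occursAtB (p : ℕ) : Bunch → ℤ → Prop
  | .fml A, n => occursAtF p A n
  | .comma X Y, n => occursAtB p X n ∨ occursAtB p Y n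
  | .semi X Y, n => occursAtB p X (n + 1) ∨ occursAtB p Y n

section DepthSharing

/-- Semantic values: pairs of propositions. -/
abbrev DV := Prop × Prop

def dle (x y : DV) : Prop := (x.1 → y.1) ∧ (x.2 → y.2)
def dand (x y : DV) : DV := (x.1 ∧ y.1, x.2 ∧ y.2)
def dor (x y : DV) : DV := (x.1 ∨ y.1, x.2 ∨ y.2)
def dneg (x : DV) : DV := (¬ x.2, ¬ x.1)

/-- Evaluation of formulas in the countermodel. -/
def evalF (val : ℕ → ℤ → DV) : Fml → ℤ → DV
  | .atom q, n => val q n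
  | .neg A, n => dneg (evalF val A n)
  | .conj A B, n => dand (evalF val A n) (evalF val B n)
  | .disj A B, n => dor (evalF val A n) (evalF val B n)
  | .imp _ B, n => evalF val B (n + 1)
  | .fus A _, n => evalF val A (n - 1)

/-- Evaluation of bunches in the countermodel. -/
def evalB (val : ℕ → ℤ → DV) : Bunch → ℤ → DV
  | .fml A, n => evalF val A n
  | .comma X Y, n => dand (evalB val X n) (evalB val Y n)
  | .semi X _, n => evalB val X (n - 1)

lemma dle_refl (x : DV) : dle x x := ⟨id, id⟩

lemma dle_trans {x y z : DV} (h1 : dle x y) (h2 : dle y z) : dle x z :=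
  ⟨fun a => h2.1 (h1.1 a), fun a => h2.2 (h1.2 a)⟩

lemma dle_dor_left (x y z : DV) (h : dle x y) : dle x (dor y z) :=
  ⟨fun a => Or.inl (h.1 a), fun a => Or.inl (h.2 a)⟩

lemma dle_dor_right (x y z : DV) (h : dle x z) : dle x (dor y z) :=
  ⟨fun a => Or.inr (h.1 a), fun a => Or.inr (h.2 a)⟩

lemma dle_dor_elim (x y z : DV) (h1 : dle x z) (h2 : dle y z) : dle (dor x y) z :=
  ⟨fun a => a.elim h1.1 h2.1, fun a => a.elim h1.2 h2.2⟩

lemma dand_mono {x x' y y' : DV} (h1 : dle x x') (h2 : dle y y') :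
    dle (dand x y) (dand x' y') :=
  ⟨fun a => ⟨h1.1 a.1, h2.1 a.2⟩, fun a => ⟨h1.2 a.1, h2.2 a.2⟩⟩

lemma fill_mono (val : ℕ → ℤ → DV) (Y : Ctx) {U V : Bunch}
    (h : ∀ k, dle (evalB val U k) (evalB val V k)) :
    ∀ n, dle (evalB val (Y.fill U) n) (evalB val (Y.fill V) n) := by
  induction Y with
  | hole => exact h
  | commaL c W ih =>
      intro n
      have := ih n
      simp only [Ctx.fill, evalB] at this ⊢
      exact dand_mono this (dle_refl _)
  | commaR W c ih =>
      intro n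
      have := ih n
      simp only [Ctx.fill, evalB] at this ⊢
      exact dand_mono (dle_refl _) this
  | semiL c W ih =>
      intro n
      simp only [Ctx.fill, evalB]
      exact ih (n - 1)
  | semiR W c ih =>
      intro n
      simp only [Ctx.fill, evalB]
      exact dle_refl _

lemma fill_or (val : ℕ → ℤ → DV) (Y : Ctx) {U V W : Bunch}
    (h : ∀ k, dle (evalB val U k) (dor (evalB val V k) (evalB val W k))) :
    ∀ n, dle (evalB val (Y.fill U) n)
      (dor (evalB val (Y.fill V) n) (evalB val (Y.fill W) n)) := by
  induction Y with
  | hole => exact h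
  | commaL c B ih =>
      intro n
      have h1 := ih n
      simp only [Ctx.fill, evalB, dle, dand, dor] at h1 ⊢
      tauto
  | commaR B c ih =>
      intro n
      have h1 := ih n
      simp only [Ctx.fill, evalB, dle, dand, dor] at h1 ⊢
      tauto
  | semiL c B ih =>
      intro n
      simp only [Ctx.fill, evalB]
      exact ih (n - 1)
  | semiR B c ih =>
      intro n
      simp only [Ctx.fill, evalB]
      exact dle_dor_left _ _ _ (dle_refl _)

/-- Soundness of the system B for the countermodel semantics. -/
lemma NDB.sound (val : ℕ → ℤ → DV) {X : Bunch} {A : Fml} (h : NDB X A) :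
    ∀ n, dle (evalB val X n) (evalF val A n) := by
  induction h with
  | id A => intro n; exact dle_refl _
  | impI h ih =>
      intro n
      have := ih (n + 1)
      simp only [evalB, evalF, add_sub_cancel_right] at this ⊢
      exact this
  | impE h1 h2 ih1 ih2 =>
      intro n
      have := ih1 (n - 1)
      simp only [evalB, evalF, sub_add_cancel] at this ⊢
      exact this
  | orI1 B h ih =>
      intro n
      simp only [evalF]
      exact dle_dor_left _ _ _ (ih n)
  | orI2 A h ih =>
      intro n
      simp only [evalF]
      exact dle_dor_right _ _ _ (ih n)
  | orE h1 h2 h3 ih1 ih2 ih3 =>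
      intro n
      refine dle_trans (fill_or val _ (fun k => ?_) n) (dle_dor_elim _ _ _ (ih2 n) (ih3 n))
      have := ih1 k
      simp only [evalB, evalF] at this ⊢
      exact this
  | andI h1 h2 ih1 ih2 =>
      intro n
      simp only [evalB, evalF]
      exact dand_mono (ih1 n) (ih2 n)
  | andE h1 h2 ih1 ih2 =>
      intro n
      refine dle_trans (fill_mono val _ (fun k => ?_) n) (ih2 n)
      have := ih1 k
      simp only [evalB, evalF] at this ⊢
      exact this
  | fusI h1 h2 ih1 ih2 =>
      intro n
      simp only [evalB, evalF]
      exact ih1 (n - 1)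
  | fusE h1 h2 ih1 ih2 =>
      intro n
      refine dle_trans (fill_mono val _ (fun k => ?_) n) (ih2 n)
      have := ih1 k
      simp only [evalB, evalF] at this ⊢
      exact this
  | negI h1 h2 ih1 ih2 =>
      intro n
      have h1' := ih1 n
      have h2' := ih2 n
      simp only [evalB, evalF, dle, dneg] at h1' h2' ⊢
      tauto
  | negE h ih =>
      intro n
      have := ih n
      simp only [evalB, evalF, dle, dneg] at this ⊢
      tauto
  | cut h1 h2 ih1 ih2 =>
      intro n
      refine dle_trans (fill_mono val _ (fun k => ?_) n) (ih2 n)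
      have := ih1 k
      simp only [evalB] at this ⊢
      exact this
  | eB h ih =>
      intro n
      refine dle_trans (fill_mono val _ (fun k => ?_) n) (ih n)
      simp only [evalB, dle, dand]
      tauto
  | eC h ih =>
      intro n
      refine dle_trans (fill_mono val _ (fun k => ?_) n) (ih n)
      simp only [evalB, dle, dand]
      tauto
  | eW h ih =>
      intro n
      refine dle_trans (fill_mono val _ (fun k => ?_) n) (ih n)
      simp only [evalB, dle, dand]
      tauto
  | eK h ih =>
      intro n
      refine dle_trans (fill_mono val _ (fun k => ?_) n) (ih n)
      simp only [evalB, dle, dand]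
      tauto

lemma evalF_const (val : ℕ → ℤ → DV) (c : DV) (hn : dneg c = c) (ha : dand c c = c)
    (ho : dor c c = c) :
    ∀ (A : Fml) (n : ℤ), (∀ p m, occursAtF p A m → val p (n + m) = c) →
      evalF val A n = c := by
  intro A
  induction A with
  | atom q =>
      intro n h
      have := h q 0 ⟨rfl, rfl⟩
      simpa [evalF] using this
  | neg A ih =>
      intro n h
      simp only [evalF]
      rw [ih n (fun p m hm => h p m hm), hn]
  | conj A B ihA ihB =>
      intro n h
      simp only [evalF]
      rw [ihA n (fun p m hm => h p m (Or.inl hm)),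
        ihB n (fun p m hm => h p m (Or.inr hm)), ha]
  | disj A B ihA ihB =>
      intro n h
      simp only [evalF]
      rw [ihA n (fun p m hm => h p m (Or.inl hm)),
        ihB n (fun p m hm => h p m (Or.inr hm)), ho]
  | imp A B ihA ihB =>
      intro n h
      simp only [evalF]
      refine ihB (n + 1) (fun p m hm => ?_)
      have := h p (m + 1) (Or.inr (by simpa using hm))
      rwa [show n + (m + 1) = n + 1 + m by ring] at this
  | fus A B ihA ihB =>
      intro n h
      simp only [evalF]
      refine ihA (n - 1) (fun p m hm => ?_)
      have := h p (m - 1) (Or.inl (by simpa using hm))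
      rwa [show n + (m - 1) = n - 1 + m by ring] at this

lemma evalB_const (val : ℕ → ℤ → DV) (c : DV) (hn : dneg c = c) (ha : dand c c = c)
    (ho : dor c c = c) :
    ∀ (X : Bunch) (n : ℤ), (∀ p m, occursAtB p X m → val p (n + m) = c) →
      evalB val X n = c := by
  intro X
  induction X with
  | fml A =>
      intro n h
      simp only [evalB]
      exact evalF_const val c hn ha ho A n h
  | comma X Y ihX ihY =>
      intro n h
      simp only [evalB]
      rw [ihX n (fun p m hm => h p m (Or.inl hm)),
        ihY n (fun p m hm => h p m (Or.inr hm)), ha]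
  | semi X Y ihX ihY =>
      intro n h
      simp only [evalB]
      refine ihX (n - 1) (fun p m hm => ?_)
      have := h p (m - 1) (Or.inl (by simpa using hm))
      rwa [show n + (m - 1) = n - 1 + m by ring] at this

end DepthSharing

/-- If X ⊩ A is provable in the natural deduction system B, then X and A depth-share
a variable. -/
theorem NDB_depth_variable_sharing (X : Bunch) (A : Fml) (h : NDB X A) :
    ∃ (p : ℕ) (n : ℤ), occursAtB p X n ∧ occursAtF p A n := by
  by_contra hc
  push_neg at hc
  classical
  set val : ℕ → ℤ → DV := fun p m => (occursAtB p X m, ¬ occursAtB p X m) with hval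
  have hna : dneg ((True, False) : DV) = (True, False) := by simp [dneg]
  have haa : dand ((True, False) : DV) (True, False) = (True, False) := by simp [dand]
  have hoa : dor ((True, False) : DV) (True, False) = (True, False) := by simp [dor]
  have hnb : dneg ((False, True) : DV) = (False, True) := by simp [dneg]
  have hab : dand ((False, True) : DV) (False, True) = (False, True) := by simp [dand]
  have hob : dor ((False, True) : DV) (False, True) = (False, True) := by simp [dor]
  have hX : evalB val X 0 = (True, False) := by
    refine evalB_const val _ hna haa hoa X 0 (fun p m hm => ?_)
    rw [zero_add]
    simp only [hval, Prod.ext_iff]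
    simp [hm]
  have hA : evalF val A 0 = (False, True) := by
    refine evalF_const val _ hnb hab hob A 0 (fun p m hm => ?_)
    have hno : ¬ occursAtB p X m := fun hx => hc p m hx hm
    rw [zero_add]
    simp only [hval, Prod.ext_iff]
    simp [hno]
  have hs := h.sound val 0
  rw [hX, hA] at hs
  exact hs.1 trivial
end
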